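/- Suppose P = {f_1, …, f_n} (n ≥ 2, f_i continuous) is a 2-overlapping Ruspini partition in which each f_i is strongly normal and min-convex, and let t_i be the unique point with f_i(t_i) = 1, indexed so that t_1 < t_2 < ⋯ < t_n. Then t_1 = 0 and t_n = 1. -/

import Mathlib

/-!
At a peak `t i` the function `f i` already takes the value `1`, so by the Ruspini condition every
other `f j` vanishes there. Min-convexity says that each `f j` is quasiconcave, so
`f j (t i) ≥ min (f j x) (f j (t j)) = min (f j x) 1` whenever `t i` lies between `x` and `t j`.
For the first peak and `x = 0` (resp. the last peak and `x = 1`) this holds for all `j ≠ i`, so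
all the other functions vanish at the endpoint, `f i` equals `1` there, and uniqueness of the peak
places `t i` at the endpoint.
-/

open Set

theorem quasiconcaveOn_of_min_le {s : Set ℝ} {g : ℝ → ℝ} (hs : Convex ℝ s)
    (hg : ∀ x ∈ s, ∀ y ∈ s, ∀ l ∈ Icc (0:ℝ) 1,
      min (g x) (g y) ≤ g (l * x + (1 - l) * y)) :
    QuasiconcaveOn ℝ s g := by
  refine quasiconcaveOn_iff_min_le.2 ⟨hs, fun x hx y hy a b ha hb hab => ?_⟩
  obtain rfl : b = 1 - a := by linarith
  exact hg x hx y hy a ⟨ha, by linarith⟩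

theorem QuasiconcaveOn.min_le_of_mem_segment {𝕜 E β : Type*} [Semiring 𝕜] [PartialOrder 𝕜]
    [AddCommMonoid E] [SMul 𝕜 E] [LinearOrder β] {s : Set E} {g : E → β}
    (hg : QuasiconcaveOn 𝕜 s g) {x y z : E} (hx : x ∈ s) (hy : y ∈ s)
    (hz : z ∈ segment 𝕜 x y) :
    min (g x) (g y) ≤ g z :=
  ((hg _).segment_subset ⟨hx, min_le_left _ _⟩ ⟨hy, min_le_right _ _⟩ hz).2

theorem Finset.eq_zero_of_sum_eq_of_nonneg {ι M : Type*} [Fintype ι] [DecidableEq ι]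
    [AddCommMonoid M] [PartialOrder M] [IsOrderedCancelAddMonoid M] {g : ι → M}
    (hg : ∀ j, 0 ≤ g j) {i j : ι} (hsum : ∑ k, g k = g i) (hji : j ≠ i) : g j = 0 := by
  rw [← Finset.add_sum_erase _ _ (Finset.mem_univ i), add_eq_left] at hsum
  exact (Finset.sum_eq_zero_iff_of_nonneg fun k _ => hg k).1 hsum j (by simp [hji])

section RuspiniPartition

variable {ι : Type*} [Fintype ι] {f : ι → ℝ → ℝ} {s : Set ℝ} {t : ι → ℝ}
  (hnonneg : ∀ i, ∀ x ∈ s, 0 ≤ f i x) (hsum : ∀ x ∈ s, ∑ i, f i x = 1)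
  (ht : ∀ i, t i ∈ s) (hpeak : ∀ i, f i (t i) = 1)

include hnonneg hsum ht hpeak in
theorem apply_peak_eq_zero {i j : ι} (hji : j ≠ i) : f j (t i) = 0 := by
  classical
  exact Finset.eq_zero_of_sum_eq_of_nonneg (fun k => hnonneg k _ (ht i))
    ((hsum _ (ht i)).trans (hpeak i).symm) hji

include hnonneg hsum ht hpeak in
theorem apply_eq_zero_of_peak_mem_uIcc (hquasi : ∀ i, QuasiconcaveOn ℝ s (f i)) {i j : ι}
    (hji : j ≠ i) {x : ℝ} (hx : x ∈ s) (hbetween : t i ∈ uIcc x (t j)) : f j x = 0 := by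
  refine (hnonneg j x hx).antisymm' (not_lt.1 fun hpos => ?_)
  have hmin : min (f j x) (f j (t j)) ≤ f j (t i) :=
    (hquasi j).min_le_of_mem_segment hx (ht j) (by rwa [segment_eq_uIcc])
  rw [hpeak j, apply_peak_eq_zero hnonneg hsum ht hpeak hji] at hmin
  exact (lt_min hpos one_pos).not_ge hmin

include hnonneg hsum ht hpeak in
theorem peak_eq_of_mem_uIcc (hquasi : ∀ i, QuasiconcaveOn ℝ s (f i))
    (huniq : ∀ i, ∀ y ∈ s, f i y = 1 → y = t i) {i : ι} {x : ℝ} (hx : x ∈ s)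
    (hbetween : ∀ j ≠ i, t i ∈ uIcc x (t j)) : t i = x := by
  classical
  refine (huniq i x hx ?_).symm
  rw [← hsum x hx, Finset.sum_eq_single i (fun j _ hji => ?_) (by simp)]
  exact apply_eq_zero_of_peak_mem_uIcc hnonneg hsum ht hpeak hquasi hji hx (hbetween j hji)

end RuspiniPartition

/-- For a 2-overlapping Ruspini partition of continuous fuzzy sets, each strongly
normal with (unique) peak `t i` and min-convex, with `t` strictly increasing,
the first peak is `0` and the last is `1`. -/
theorem stmt8 (n : ℕ) (hn : 2 ≤ n) (f : Fin n → ℝ → ℝ)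
    (hmap : ∀ i, Set.MapsTo (f i) (Set.Icc 0 1) (Set.Icc 0 1))
    (hruspini : ∀ x ∈ Set.Icc (0:ℝ) 1, ∑ i : Fin n, f i x = 1)
    (t : Fin n → ℝ)
    (htmem : ∀ i, t i ∈ Set.Icc (0:ℝ) 1)
    (hpeak : ∀ i, f i (t i) = 1)
    (huniq : ∀ i, ∀ y ∈ Set.Icc (0:ℝ) 1, f i y = 1 → y = t i)
    (hconv : ∀ i, ∀ x ∈ Set.Icc (0:ℝ) 1, ∀ y ∈ Set.Icc (0:ℝ) 1,
      ∀ l ∈ Set.Icc (0:ℝ) 1, min (f i x) (f i y) ≤ f i (l * x + (1 - l) * y))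
    (hmono : StrictMono t) :
    t ⟨0, by omega⟩ = 0 ∧ t ⟨n - 1, by omega⟩ = 1 := by
  have hnonneg : ∀ i, ∀ x ∈ Icc (0:ℝ) 1, 0 ≤ f i x := fun i _ hx => (hmap i hx).1
  have hquasi : ∀ i, QuasiconcaveOn ℝ (Icc 0 1) (f i) :=
    fun i => quasiconcaveOn_of_min_le (convex_Icc 0 1) (hconv i)
  constructor
  · refine peak_eq_of_mem_uIcc hnonneg hruspini htmem hpeak hquasi huniq ⟨le_rfl, zero_le_one⟩
      fun j _ => mem_uIcc.2 <| .inl ⟨(htmem _).1, hmono.monotone ?_⟩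
    exact Fin.mk_le_of_le_val (Nat.zero_le _)
  · refine peak_eq_of_mem_uIcc hnonneg hruspini htmem hpeak hquasi huniq ⟨zero_le_one, le_rfl⟩
      fun j _ => mem_uIcc.2 <| .inr ⟨hmono.monotone ?_, (htmem _).2⟩
    exact Fin.le_def.2 (by dsimp only; omega)
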